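/- arXiv:1412.2526 — 7 statements merged into one kernel-verified Lean document; each statement's English description precedes it below -/
import Mathlib

section
/- For every natural number n, there is no family of n+1 closed intervals of length 1 with pairwise disjoint interiors all contained in [0, n]. Formally: there is no function x : Fin (n+1) → ℝ such that for every i, 0 ≤ x i and x i + 1 ≤ n, and for all i ≠ j the open intervals (x i, x i + 1) and (x j, x j + 1) are disjoint. -/
/-! Sending each interval `[x, x + 1] ⊆ [0, n]` to `⌊x⌋₊ ∈ {0, …, n - 1}` is injective, because
two unit intervals whose left ends have the same floor are less than `1` apart and so overlap. -/

open Set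

theorem not_disjoint_Ioo_of_abs_sub_lt {α : Type*} [Field α] [LinearOrder α]
    [IsStrictOrderedRing α] {a b ℓ : α} (h : |a - b| < ℓ) :
    ¬ Disjoint (Ioo a (a + ℓ)) (Ioo b (b + ℓ)) := by
  rw [Ioo_disjoint_Ioo, not_le]
  obtain ⟨hab, hba⟩ := abs_sub_lt_iff.mp h
  have hℓ : 0 < ℓ := (abs_nonneg _).trans_lt h
  exact max_lt (lt_min (by linarith) (by linarith)) (lt_min (by linarith) (by linarith))

theorem Nat.abs_sub_lt_one_of_floor_eq_floor {α : Type*} [Field α] [LinearOrder α]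
    [IsStrictOrderedRing α] [FloorSemiring α] {a b : α} (ha : 0 ≤ a) (hb : 0 ≤ b)
    (h : ⌊a⌋₊ = ⌊b⌋₊) : |a - b| < 1 := by
  have ha₁ := Nat.floor_le ha
  have ha₂ := Nat.lt_floor_add_one a
  have hb₁ := Nat.floor_le hb
  have hb₂ := Nat.lt_floor_add_one b
  rw [h] at ha₁ ha₂
  exact abs_sub_lt_iff.mpr ⟨by linarith, by linarith⟩

theorem card_le_of_pairwise_disjoint_unit_Ioo {α ι : Type*} [Field α] [LinearOrder α]
    [IsStrictOrderedRing α] [FloorSemiring α] [Fintype ι] {n : ℕ} (x : ι → α)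
    (hx : ∀ i, 0 ≤ x i ∧ x i + 1 ≤ n)
    (hd : Pairwise fun i j => Disjoint (Ioo (x i) (x i + 1)) (Ioo (x j) (x j + 1))) :
    Fintype.card ι ≤ n := by
  have hmaps : ∀ i ∈ (Finset.univ : Finset ι), ⌊x i⌋₊ ∈ Finset.range n := fun i _ =>
    Finset.mem_range.mpr <| (Nat.floor_lt (hx i).1).mpr (by linarith [hx i])
  have hinj : InjOn (fun i => ⌊x i⌋₊) (Finset.univ : Finset ι) := by
    intro i _ j _ hij
    by_contra hne
    exact not_disjoint_Ioo_of_abs_sub_lt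
      (Nat.abs_sub_lt_one_of_floor_eq_floor (hx i).1 (hx j).1 hij) (hd hne)
  simpa using Finset.card_le_card_of_injOn _ hmaps hinj

theorem one_dim_pigeonhole (n : ℕ) :
    ¬ ∃ x : Fin (n + 1) → ℝ,
      (∀ i, 0 ≤ x i ∧ x i + 1 ≤ (n : ℝ)) ∧
      (∀ i j, i ≠ j →
        Disjoint (Set.Ioo (x i) (x i + 1)) (Set.Ioo (x j) (x j + 1))) := by
  rintro ⟨x, hx, hd⟩
  have hcard := card_le_of_pairwise_disjoint_unit_Ioo x hx fun i j => hd i j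
  rw [Fintype.card_fin] at hcard
  omega
end

section
/- Let 0 ≤ ε < 1 and n be a natural number. Let a, b ∈ ℝ³ be the lower corners of two axis-aligned unit cubes, each contained in the container [0, 1+ε] × [0, 1+ε] × [0, n]. If the interiors of the two cubes are disjoint, then the open intervals (a₃, a₃ + 1) and (b₃, b₃ + 1) (their projections onto the third axis) are disjoint. -/
/-!
A unit cube in the container has its corner in `[0, ε]` along each of the two short axes, so
since `ε < 1` the side intervals of two such cubes overlap along both short axes. Two open boxes
are disjoint only if they are disjoint along some axis, which must therefore be the long one.
-/

open Set

theorem Set.not_disjoint_Ioo_add_of_abs_sub_lt {α : Type*} [Field α] [LinearOrder α]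
    [IsStrictOrderedRing α] {x y l : α} (h : |x - y| < l) :
    ¬Disjoint (Ioo x (x + l)) (Ioo y (y + l)) := by
  have hl : 0 < l := (abs_nonneg _).trans_lt h
  rw [abs_sub_lt_iff] at h
  rw [Ioo_disjoint_Ioo, not_le, lt_min_iff, max_lt_iff, max_lt_iff]
  refine ⟨⟨?_, ?_⟩, ?_, ?_⟩ <;> linarith

theorem disjoint_cubes_project_to_long_axis_general (ε : ℝ) (n : ℕ)
    (hε1 : ε < 1) (a b : Fin 3 → ℝ)
    (ha : (Set.univ.pi fun i => Set.Icc (a i) (a i + 1)) ⊆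
      Set.univ.pi fun i => Set.Icc 0 (![1 + ε, 1 + ε, (n : ℝ)] i))
    (hb : (Set.univ.pi fun i => Set.Icc (b i) (b i + 1)) ⊆
      Set.univ.pi fun i => Set.Icc 0 (![1 + ε, 1 + ε, (n : ℝ)] i))
    (hdisj : Disjoint (Set.univ.pi fun i => Set.Ioo (a i) (a i + 1))
      (Set.univ.pi fun i => Set.Ioo (b i) (b i + 1))) :
    Disjoint (Set.Ioo (a 2) (a 2 + 1)) (Set.Ioo (b 2) (b 2 + 1)) := by
  set box : Fin 3 → ℝ := ![1 + ε, 1 + ε, (n : ℝ)]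
  have corner_bounds (c : Fin 3 → ℝ)
      (hc : (univ.pi fun i => Icc (c i) (c i + 1)) ⊆ univ.pi fun i => Icc 0 (box i)) :
      0 ≤ c ∧ c + 1 ≤ box := by
    rw [pi_univ_Icc, pi_univ_Icc] at hc
    exact (Icc_subset_Icc_iff (by simp)).mp hc
  obtain ⟨ha0, ha1⟩ := corner_bounds a ha
  obtain ⟨hb0, hb1⟩ := corner_bounds b hb
  have overlap_of_short_axis (j : Fin 3) (hj : box j = 1 + ε) :
      ¬Disjoint (Ioo (a j) (a j + 1)) (Ioo (b j) (b j + 1)) := by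
    have haj : a j + 1 ≤ 1 + ε := hj ▸ ha1 j
    have hbj : b j + 1 ≤ 1 + ε := hj ▸ hb1 j
    exact not_disjoint_Ioo_add_of_abs_sub_lt <|
      abs_sub_lt_of_nonneg_of_lt (ha0 j) (by linarith) (hb0 j) (by linarith)
  obtain ⟨i, hi⟩ := disjoint_univ_pi.mp hdisj
  fin_cases i
  · exact absurd hi (overlap_of_short_axis 0 rfl)
  · exact absurd hi (overlap_of_short_axis 1 rfl)
  · exact hi

theorem disjoint_cubes_project_to_long_axis (ε : ℝ) (n : ℕ)
    (hε0 : 0 ≤ ε) (hε1 : ε < 1) (a b : Fin 3 → ℝ)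
    (ha : (Set.univ.pi fun i => Set.Icc (a i) (a i + 1)) ⊆
      Set.univ.pi fun i => Set.Icc 0 (![1 + ε, 1 + ε, (n : ℝ)] i))
    (hb : (Set.univ.pi fun i => Set.Icc (b i) (b i + 1)) ⊆
      Set.univ.pi fun i => Set.Icc 0 (![1 + ε, 1 + ε, (n : ℝ)] i))
    (hdisj : Disjoint (Set.univ.pi fun i => Set.Ioo (a i) (a i + 1))
      (Set.univ.pi fun i => Set.Ioo (b i) (b i + 1))) :
    Disjoint (Set.Ioo (a 2) (a 2 + 1)) (Set.Ioo (b 2) (b 2 + 1)) :=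
  disjoint_cubes_project_to_long_axis_general ε n hε1 a b ha hb hdisj
end

section
/- Let 0 ≤ ε < 1 and n be a natural number. There is no family of n+1 axis-aligned unit cubes with pairwise disjoint interiors all contained in the container [0, 1+ε] × [0, 1+ε] × [0, n]. Formally: there is no function a : Fin (n+1) → ℝ³ such that for each i the unit cube with lower corner a i is contained in [0, 1+ε] × [0, 1+ε] × [0, n], and for all i ≠ j the interiors of the cubes at a i and a j are disjoint. -/
/-!
The two short sides of the container are shorter than 2, so the projections of any two
cubes onto each of them overlap. Disjoint interiors therefore force the projections onto
the long side to be disjoint, and `n + 1` disjoint open unit intervals do not fit into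
`[0, n]`, by comparing lengths.
-/

open Set Function MeasureTheory

lemma bounds_of_pi_Icc_subset_pi_Icc {ι : Type*} {a c : ι → ℝ}
    (h : (univ.pi fun k => Icc (a k) (a k + 1)) ⊆ univ.pi fun k => Icc 0 (c k)) (k : ι) :
    0 ≤ a k ∧ a k + 1 ≤ c k := by
  rw [pi_univ_Icc, pi_univ_Icc, Icc_subset_Icc_iff fun k => by simp] at h
  exact ⟨h.1 k, h.2 k⟩

lemma not_disjoint_Ioo_add_one {x y : ℝ} (h : |x - y| < 1) :
    ¬ Disjoint (Ioo x (x + 1)) (Ioo y (y + 1)) := by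
  rw [Ioo_disjoint_Ioo, not_le, lt_min_iff, max_lt_iff, max_lt_iff]
  rw [abs_sub_lt_iff] at h
  refine ⟨⟨?_, ?_⟩, ?_, ?_⟩ <;> linarith

lemma card_le_of_pairwise_disjoint_Ioo_add_one {ι : Type*} [Fintype ι] [Nonempty ι]
    {x : ι → ℝ} {lo hi : ℝ}
    (hdisj : Pairwise (Disjoint on fun i => Ioo (x i) (x i + 1)))
    (hlo : ∀ i, lo ≤ x i) (hhi : ∀ i, x i + 1 ≤ hi) :
    (Fintype.card ι : ℝ) ≤ hi - lo := by
  have hsub : (⋃ i, Ioo (x i) (x i + 1)) ⊆ Icc lo hi := by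
    exact iUnion_subset fun i => Ioo_subset_Icc_self.trans (Icc_subset_Icc (hlo i) (hhi i))
  have hvol := measure_mono (μ := volume) hsub
  rw [measure_iUnion hdisj fun _ => measurableSet_Ioo] at hvol
  simp only [Real.volume_Ioo, add_sub_cancel_left, ENNReal.ofReal_one, tsum_fintype,
    Finset.sum_const, Finset.card_univ, nsmul_eq_mul, mul_one, Real.volume_Icc] at hvol
  rwa [← ENNReal.ofReal_natCast, ENNReal.ofReal_le_ofReal_iff (by
    obtain ⟨i⟩ := ‹Nonempty ι›; linarith [hlo i, hhi i])] at hvol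

theorem pigeon_infeasible_general (ε : ℝ) (n : ℕ) (hε1 : ε < 1) :
    ¬ ∃ a : Fin (n + 1) → (Fin 3 → ℝ),
      (∀ i, (Set.univ.pi fun k => Set.Icc (a i k) (a i k + 1)) ⊆
        Set.univ.pi fun k => Set.Icc 0 (![1 + ε, 1 + ε, (n : ℝ)] k)) ∧
      (∀ i j, i ≠ j →
        Disjoint (Set.univ.pi fun k => Set.Ioo (a i k) (a i k + 1))
          (Set.univ.pi fun k => Set.Ioo (a j k) (a j k + 1))) := by
  rintro ⟨a, hsub, hdisj⟩
  have hbounds := fun i => bounds_of_pi_Icc_subset_pi_Icc (hsub i)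
  have hshort : ∀ i k, k ≠ 2 → a i k ≤ ε := by
    intro i k hk
    have := (hbounds i k).2
    fin_cases k <;> simp_all <;> linarith
  have hside : ∀ i j k, k ≠ 2 → |a i k - a j k| < 1 := fun i j k hk => by
    rw [abs_sub_lt_iff]
    constructor <;> linarith [hshort i k hk, hshort j k hk, (hbounds i k).1, (hbounds j k).1]
  have hlong : Pairwise (Disjoint on fun i => Ioo (a i 2) (a i 2 + 1)) := by
    intro i j hij
    obtain ⟨k, hk⟩ := disjoint_univ_pi.1 (hdisj i j hij)
    by_cases h2 : k = 2
    · exact h2 ▸ hk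
    · exact absurd hk (not_disjoint_Ioo_add_one (hside i j k h2))
  have hcard := card_le_of_pairwise_disjoint_Ioo_add_one hlong (fun i => (hbounds i 2).1)
    fun i => by simpa using (hbounds i 2).2
  simp only [Fintype.card_fin, Nat.cast_add, Nat.cast_one, sub_zero] at hcard
  linarith

theorem pigeon_infeasible (ε : ℝ) (n : ℕ) (hε0 : 0 ≤ ε) (hε1 : ε < 1) :
    ¬ ∃ a : Fin (n + 1) → (Fin 3 → ℝ),
      (∀ i, (Set.univ.pi fun k => Set.Icc (a i k) (a i k + 1)) ⊆
        Set.univ.pi fun k => Set.Icc 0 (![1 + ε, 1 + ε, (n : ℝ)] k)) ∧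
      (∀ i j, i ≠ j →
        Disjoint (Set.univ.pi fun k => Set.Ioo (a i k) (a i k + 1))
          (Set.univ.pi fun k => Set.Ioo (a j k) (a j k + 1))) :=
  pigeon_infeasible_general ε n hε1
end

section
/- Let 0 ≤ ε < 1 and n ≥ 1. The maximum number of axis-aligned unit cubes with pairwise disjoint interiors that can be contained in the container [0, 1+ε] × [0, 1+ε] × [0, n] is exactly n: there exists a family of n such cubes with pairwise disjoint interiors all contained in the container, and there is no such family of n+1 cubes. -/
/-!
Stacking the cubes along the long side gives `n` of them. Conversely, since the two short sides
are shorter than `2`, two cubes with disjoint interiors can only be separated along the long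
side, so the positions of `n + 1` such cubes along it would be `n + 1` points of `[0, n - 1]` at
mutual distance at least `1`, which pigeonholing on their integer parts rules out.
-/

open Set

section UnitCubes

variable {κ : Type*}

def unitCube (a : κ → ℝ) : Set (κ → ℝ) := univ.pi fun k => Icc (a k) (a k + 1)

def openUnitCube (a : κ → ℝ) : Set (κ → ℝ) := univ.pi fun k => Ioo (a k) (a k + 1)

def originBox (L : κ → ℝ) : Set (κ → ℝ) := univ.pi fun k => Icc 0 (L k)

theorem unitCube_subset_originBox_iff {a L : κ → ℝ} :
    unitCube a ⊆ originBox L ↔ ∀ k, 0 ≤ a k ∧ a k + 1 ≤ L k := by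
  have ha : a ≤ fun k => a k + 1 := fun k => by simp
  simp only [unitCube, originBox, pi_univ_Icc, Icc_subset_Icc_iff ha, Pi.le_def, forall_and]

theorem disjoint_Ioo_add_one_iff {x y : ℝ} :
    Disjoint (Ioo x (x + 1)) (Ioo y (y + 1)) ↔ 1 ≤ |x - y| := by
  rw [Ioo_disjoint_Ioo]
  rcases le_total x y with h | h
  · rw [min_eq_left (by linarith), max_eq_right h, abs_sub_comm, abs_of_nonneg (by linarith)]
    constructor <;> intro <;> linarith
  · rw [min_eq_right (by linarith), max_eq_left h, abs_of_nonneg (by linarith)]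
    constructor <;> intro <;> linarith

theorem disjoint_openUnitCube_iff {a b : κ → ℝ} :
    Disjoint (openUnitCube a) (openUnitCube b) ↔ ∃ k, 1 ≤ |a k - b k| := by
  simp only [openUnitCube, disjoint_univ_pi, disjoint_Ioo_add_one_iff]

end UnitCubes

theorem exists_ne_abs_sub_lt_one {ι : Type*} [Fintype ι] {f : ι → ℝ} {n : ℕ}
    (hf : ∀ i, 0 ≤ f i ∧ f i < n) (hcard : n < Fintype.card ι) :
    ∃ i j, i ≠ j ∧ |f i - f j| < 1 := by
  have hmaps : MapsTo (fun i => ⌊f i⌋) (Finset.univ : Finset ι) (Finset.Ico (0 : ℤ) n) :=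
    fun i _ => by simpa [Int.floor_nonneg, Int.floor_lt] using hf i
  obtain ⟨i, -, j, -, hij, hfloor⟩ :=
    Finset.exists_ne_map_eq_of_card_lt_of_maps_to (by simpa using hcard) hmaps
  exact ⟨i, j, hij, Int.abs_sub_lt_one_of_floor_eq_floor hfloor⟩

section Packing

variable {ι κ : Type*}

theorem stacked_unitCubes_subset_originBox [DecidableEq κ] {n : ℕ} {L : κ → ℝ} {k₀ : κ}
    (hL : ∀ k ≠ k₀, 1 ≤ L k) (hk₀ : L k₀ = n) (i : Fin n) :
    unitCube (Pi.single k₀ (i : ℝ)) ⊆ originBox L := by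
  refine unitCube_subset_originBox_iff.2 fun k => ?_
  by_cases hk : k = k₀
  · subst hk
    have : (i : ℝ) + 1 ≤ n := by exact_mod_cast i.isLt
    simp [hk₀, this]
  · simp [hk, hL k hk]

theorem pairwise_disjoint_stacked_openUnitCubes [DecidableEq κ] (n : ℕ) (k₀ : κ) :
    Pairwise fun i j : Fin n =>
      Disjoint (openUnitCube (Pi.single k₀ (i : ℝ)))
        (openUnitCube (Pi.single k₀ (j : ℝ))) := by
  intro i j hij
  refine disjoint_openUnitCube_iff.2 ⟨k₀, ?_⟩
  simp only [Pi.single_eq_same]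
  rcases Fin.lt_or_lt_of_ne hij with h | h
  · have : (i : ℝ) + 1 ≤ j := by exact_mod_cast h
    rw [abs_sub_comm, abs_of_nonneg] <;> linarith
  · have : (j : ℝ) + 1 ≤ i := by exact_mod_cast h
    rw [abs_of_nonneg] <;> linarith

theorem one_le_abs_sub_of_disjoint_openUnitCube {a : ι → κ → ℝ} {L : κ → ℝ} {k₀ : κ}
    (hL : ∀ k ≠ k₀, L k < 2) (hsub : ∀ i, unitCube (a i) ⊆ originBox L) {i j : ι}
    (hdisj : Disjoint (openUnitCube (a i)) (openUnitCube (a j))) :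
    1 ≤ |a i k₀ - a j k₀| := by
  obtain ⟨k, hk⟩ := disjoint_openUnitCube_iff.1 hdisj
  by_cases hk₀ : k = k₀
  · exact hk₀ ▸ hk
  have hclose : |a i k - a j k| < 1 := by
    have hi := unitCube_subset_originBox_iff.1 (hsub i) k
    have hj := unitCube_subset_originBox_iff.1 (hsub j) k
    have := hL k hk₀
    exact abs_sub_lt_iff.2 ⟨by linarith, by linarith⟩
  exact absurd hk hclose.not_ge

theorem card_le_of_pairwise_disjoint_openUnitCube [Fintype ι] {a : ι → κ → ℝ}
    {L : κ → ℝ} {k₀ : κ} {n : ℕ} (hL : ∀ k ≠ k₀, L k < 2) (hk₀ : L k₀ ≤ n)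
    (hsub : ∀ i, unitCube (a i) ⊆ originBox L)
    (hdisj : Pairwise fun i j => Disjoint (openUnitCube (a i)) (openUnitCube (a j))) :
    Fintype.card ι ≤ n := by
  by_contra! hcard
  have hpos : ∀ i, 0 ≤ a i k₀ ∧ a i k₀ < n := fun i => by
    have := unitCube_subset_originBox_iff.1 (hsub i) k₀
    exact ⟨this.1, by linarith⟩
  obtain ⟨i, j, hij, hclose⟩ := exists_ne_abs_sub_lt_one hpos hcard
  exact hclose.not_ge (one_le_abs_sub_of_disjoint_openUnitCube hL hsub (hdisj hij))

end Packing

theorem pigeon_optimum_general (ε : ℝ) (n : ℕ) (hε0 : 0 ≤ ε) (hε1 : ε < 1) :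
    (∃ a : Fin n → (Fin 3 → ℝ),
      (∀ i, (Set.univ.pi fun k => Set.Icc (a i k) (a i k + 1)) ⊆
        Set.univ.pi fun k => Set.Icc 0 (![1 + ε, 1 + ε, (n : ℝ)] k)) ∧
      (∀ i j, i ≠ j →
        Disjoint (Set.univ.pi fun k => Set.Ioo (a i k) (a i k + 1))
          (Set.univ.pi fun k => Set.Ioo (a j k) (a j k + 1)))) ∧
    ¬ ∃ a : Fin (n + 1) → (Fin 3 → ℝ),
      (∀ i, (Set.univ.pi fun k => Set.Icc (a i k) (a i k + 1)) ⊆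
        Set.univ.pi fun k => Set.Icc 0 (![1 + ε, 1 + ε, (n : ℝ)] k)) ∧
      (∀ i j, i ≠ j →
        Disjoint (Set.univ.pi fun k => Set.Ioo (a i k) (a i k + 1))
          (Set.univ.pi fun k => Set.Ioo (a j k) (a j k + 1))) := by
  set L : Fin 3 → ℝ := ![1 + ε, 1 + ε, (n : ℝ)]
  have hshort : ∀ k ≠ 2, 1 ≤ L k ∧ L k < 2 := by
    intro k hk
    fin_cases k <;> simp [L] at hk ⊢ <;> constructor <;> linarith
  refine ⟨⟨fun i => Pi.single 2 (i : ℝ), fun i => ?_,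
    pairwise_disjoint_stacked_openUnitCubes n 2⟩, ?_⟩
  · exact stacked_unitCubes_subset_originBox (fun k hk => (hshort k hk).1) rfl i
  · rintro ⟨a, hsub, hdisj⟩
    have hcard := card_le_of_pairwise_disjoint_openUnitCube (k₀ := 2) (n := n)
      (fun k hk => (hshort k hk).2) le_rfl hsub hdisj
    simp at hcard

theorem pigeon_optimum (ε : ℝ) (n : ℕ) (hε0 : 0 ≤ ε) (hε1 : ε < 1) (hn : 1 ≤ n) :
    (∃ a : Fin n → (Fin 3 → ℝ),
      (∀ i, (Set.univ.pi fun k => Set.Icc (a i k) (a i k + 1)) ⊆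
        Set.univ.pi fun k => Set.Icc 0 (![1 + ε, 1 + ε, (n : ℝ)] k)) ∧
      (∀ i j, i ≠ j →
        Disjoint (Set.univ.pi fun k => Set.Ioo (a i k) (a i k + 1))
          (Set.univ.pi fun k => Set.Ioo (a j k) (a j k + 1)))) ∧
    ¬ ∃ a : Fin (n + 1) → (Fin 3 → ℝ),
      (∀ i, (Set.univ.pi fun k => Set.Icc (a i k) (a i k + 1)) ⊆
        Set.univ.pi fun k => Set.Icc 0 (![1 + ε, 1 + ε, (n : ℝ)] k)) ∧
      (∀ i j, i ≠ j →
        Disjoint (Set.univ.pi fun k => Set.Ioo (a i k) (a i k + 1))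
          (Set.univ.pi fun k => Set.Ioo (a j k) (a j k + 1))) :=
  pigeon_optimum_general ε n hε0 hε1
end

section
/- Let n ≥ 1, let l : Fin n → ℝ with l i > 0 for each i, let D ≥ 0, and let x : Fin n → ℝ satisfy 0 ≤ x i and x i + l i ≤ D for each i, with the open intervals (x i, x i + l i) pairwise disjoint for distinct indices. Then there exists x' : Fin n → ℝ such that: (1) 0 ≤ x' i ≤ x i for each i (hence x' i + l i ≤ D); (2) the open intervals (x' i, x' i + l i) are pairwise disjoint for distinct indices; and (3) for each i there is a subset S ⊆ Fin n with i ∉ S and x' i = ∑_{j ∈ S} l j. -/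
/-!
Move the interval starting at `x i` to the total length of the intervals starting before it.
This keeps the order of the intervals and makes each one end no later than the next begins, so
the new intervals stay disjoint; and it only moves intervals to the left, because the disjoint
intervals starting before `x i` all fit inside `[0, x i]`, so their lengths add up to at most
`x i`.
-/

open MeasureTheory Set

lemma sum_le_sub_of_pairwiseDisjoint_Ioo_subset_Icc {ι : Type*} {s : Finset ι} {a l : ι → ℝ}
    {u v : ℝ} (huv : u ≤ v) (hl : ∀ j ∈ s, 0 ≤ l j)
    (hdisj : (s : Set ι).PairwiseDisjoint fun j => Ioo (a j) (a j + l j))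
    (hsub : ∀ j ∈ s, Ioo (a j) (a j + l j) ⊆ Icc u v) :
    ∑ j ∈ s, l j ≤ v - u := by
  have hvol : volume (⋃ j ∈ s, Ioo (a j) (a j + l j)) ≤ volume (Icc u v) :=
    measure_mono (iUnion₂_subset hsub)
  rw [measure_biUnion_finset hdisj fun _ _ => measurableSet_Ioo, Real.volume_Icc] at hvol
  simp only [Real.volume_Ioo, add_sub_cancel_left] at hvol
  rwa [← ENNReal.ofReal_sum_of_nonneg hl, ENNReal.ofReal_le_ofReal_iff (sub_nonneg.2 huv)] at hvol

lemma add_le_of_disjoint_Ioo {a b p q : ℝ} (hq : 0 < q)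
    (hdisj : Disjoint (Ioo a (a + p)) (Ioo b (b + q))) (hab : a ≤ b) : a + p ≤ b := by
  rw [Ioo_disjoint_Ioo, max_eq_right hab, min_le_iff] at hdisj
  exact hdisj.resolve_right (by linarith)

lemma disjoint_Ioo_of_add_le {a b p q : ℝ} (h : a + p ≤ b) :
    Disjoint (Ioo a (a + p)) (Ioo b (b + q)) :=
  Ioo_disjoint_Ioo.2 <| (min_le_left _ _).trans (h.trans (le_max_right _ _))

section packLeft

variable {ι : Type*} [Fintype ι] (l x : ι → ℝ)

noncomputable def packLeft (i : ι) : ℝ :=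
  ∑ j with x j < x i, l j

variable {l x}

lemma packLeft_nonneg (hl : ∀ j, 0 ≤ l j) (i : ι) : 0 ≤ packLeft l x i :=
  Finset.sum_nonneg fun j _ => hl j

lemma packLeft_add_le_of_lt (hl : ∀ j, 0 ≤ l j) {i k : ι} (hik : x i < x k) :
    packLeft l x i + l i ≤ packLeft l x k := by
  classical
  have hi : i ∉ ({j | x j < x i} : Finset ι) := by simp
  rw [packLeft, packLeft, add_comm, ← Finset.sum_insert hi]
  refine Finset.sum_le_sum_of_subset_of_nonneg ?_ fun j _ _ => hl j
  intro j hj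
  simp only [Finset.mem_insert, Finset.mem_filter, Finset.mem_univ, true_and] at hj ⊢
  rcases hj with rfl | hj
  · exact hik
  · exact hj.trans hik

lemma packLeft_le (hl : ∀ j, 0 < l j) (hx0 : ∀ i, 0 ≤ x i)
    (hdisj : Pairwise fun i j => Disjoint (Ioo (x i) (x i + l i)) (Ioo (x j) (x j + l j)))
    (i : ι) : packLeft l x i ≤ x i := by
  have h := sum_le_sub_of_pairwiseDisjoint_Ioo_subset_Icc (s := {j | x j < x i}) (a := x)
    (l := l) (hx0 i) (fun j _ => (hl j).le) (fun j _ k _ hjk => hdisj hjk) ?_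
  · simpa [packLeft] using h
  intro j hj
  simp only [Finset.mem_filter, Finset.mem_univ, true_and] at hj
  exact Ioo_subset_Icc_self.trans <| Icc_subset_Icc (hx0 j)
    (add_le_of_disjoint_Ioo (hl i) (hdisj (ne_of_apply_ne x hj.ne)) hj.le)

end packLeft

theorem one_dim_normal_pattern_general (n : ℕ) (l : Fin n → ℝ)
    (hl : ∀ i, 0 < l i) (x : Fin n → ℝ)
    (hx0 : ∀ i, 0 ≤ x i)
    (hdisj : ∀ i j, i ≠ j →
      Disjoint (Set.Ioo (x i) (x i + l i)) (Set.Ioo (x j) (x j + l j))) :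
    ∃ x' : Fin n → ℝ,
      (∀ i, 0 ≤ x' i ∧ x' i ≤ x i) ∧
      (∀ i j, i ≠ j →
        Disjoint (Set.Ioo (x' i) (x' i + l i)) (Set.Ioo (x' j) (x' j + l j))) ∧
      (∀ i, ∃ S : Finset (Fin n), i ∉ S ∧ x' i = ∑ j ∈ S, l j) := by
  have hl' : ∀ i, 0 ≤ l i := fun i => (hl i).le
  refine ⟨packLeft l x, fun i => ⟨packLeft_nonneg hl' i, packLeft_le hl hx0 hdisj i⟩,
    fun i j hij => ?_, fun i => ⟨({j | x j < x i} : Finset _), by simp, rfl⟩⟩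
  rcases lt_trichotomy (x i) (x j) with hlt | heq | hgt
  · exact disjoint_Ioo_of_add_le (packLeft_add_le_of_lt hl' hlt)
  · linarith [hl i, add_le_of_disjoint_Ioo (hl j) (hdisj i j hij) heq.le]
  · exact (disjoint_Ioo_of_add_le (packLeft_add_le_of_lt hl' hgt)).symm

theorem one_dim_normal_pattern (n : ℕ) (hn : 1 ≤ n) (l : Fin n → ℝ)
    (hl : ∀ i, 0 < l i) (D : ℝ) (hD : 0 ≤ D) (x : Fin n → ℝ)
    (hx0 : ∀ i, 0 ≤ x i) (hxD : ∀ i, x i + l i ≤ D)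
    (hdisj : ∀ i j, i ≠ j →
      Disjoint (Set.Ioo (x i) (x i + l i)) (Set.Ioo (x j) (x j + l j))) :
    ∃ x' : Fin n → ℝ,
      (∀ i, 0 ≤ x' i ∧ x' i ≤ x i) ∧
      (∀ i j, i ≠ j →
        Disjoint (Set.Ioo (x' i) (x' i + l i)) (Set.Ioo (x' j) (x' j + l j))) ∧
      (∀ i, ∃ S : Finset (Fin n), i ∉ S ∧ x' i = ∑ j ∈ S, l j) :=
  one_dim_normal_pattern_general n l hl x hx0 hdisj
end

section
/- Let n ≥ 1, let D ∈ ℝ³ have all coordinates positive, let L : Fin n → ℝ³ assign to each box positive side lengths, and let a : Fin n → ℝ³ be lower corners such that each box ∏_H [a(i)_H, a(i)_H + L(i)_H] is contained in the container [0, D₁] × [0, D₂] × [0, D₃] and the interiors of distinct boxes are pairwise disjoint. Then there exist lower corners a' : Fin n → ℝ³ such that: (1) 0 ≤ a'(i)_H ≤ a(i)_H for each i and each axis H; (2) each box ∏_H [a'(i)_H, a'(i)_H + L(i)_H] is contained in the container and the interiors of distinct boxes are pairwise disjoint; and (3) for each i and each axis H there is a subset S ⊆ Fin n with i ∉ S and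 a'(i)_H = ∑_{j ∈ S} L(j)_H. -/
/-!
Among the placements `x` with `0 ≤ x ≤ a` whose boxes are pairwise separated along some axis, a
compact set containing `a`, take one minimising the sum of all coordinates. In it every coordinate
`x i k` is either `0` or the far end `x j k + L j k` of some box `j`: otherwise it could be lowered by
the smallest positive gap below it. Following these supports downwards, through strictly decreasing
values, writes `x i k` as a sum of lengths of boxes lying strictly below `i` along axis `k`.
-/

open Set Function

lemma disjoint_univ_pi_Ioo_iff {ι α : Type*} [LinearOrder α] [DenselyOrdered α]
    {u v u' v' : ι → α} (h : ∀ k, u k < v k) (h' : ∀ k, u' k < v' k) :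
    Disjoint (univ.pi fun k => Ioo (u k) (v k)) (univ.pi fun k => Ioo (u' k) (v' k)) ↔
      ∃ k, v k ≤ u' k ∨ v' k ≤ u k := by
  simp only [disjoint_univ_pi, Ioo_disjoint_Ioo, min_le_iff, le_max_iff]
  refine exists_congr fun k => ?_
  constructor
  · rintro ((h1 | h1) | (h1 | h1))
    exacts [absurd h1 (h k).not_ge, .inr h1, .inl h1, absurd h1 (h' k).not_ge]
  · rintro (h1 | h1)
    exacts [.inr (.inl h1), .inl (.inr h1)]

lemma univ_pi_Icc_add_subset_univ_pi_Icc_iff {ι : Type*} {u ℓ D : ι → ℝ} (hℓ : 0 ≤ ℓ) :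
    (univ.pi fun k => Icc (u k) (u k + ℓ k)) ⊆ univ.pi (fun k => Icc 0 (D k)) ↔
      0 ≤ u ∧ u + ℓ ≤ D := by
  rw [pi_univ_Icc, pi_univ_Icc]
  exact Icc_subset_Icc_iff (le_add_of_nonneg_right hℓ)

def PairwiseSeparated {β ι : Type*} (L x : β → ι → ℝ) : Prop :=
  ∀ i j, i ≠ j → ∃ k, x i k + L i k ≤ x j k ∨ x j k + L j k ≤ x i k

section
variable {β ι : Type*} {L x y : β → ι → ℝ}

lemma isClosed_setOf_pairwiseSeparated [Finite ι] (L : β → ι → ℝ) :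
    IsClosed {x | PairwiseSeparated L x} := by
  simp only [PairwiseSeparated, ofPred_forall, ofPred_exists, ofPred_or]
  refine isClosed_iInter fun i => isClosed_iInter fun j => isClosed_iInter fun _ =>
    isClosed_iUnion_of_finite fun k => .union ?_ ?_ <;>
  exact isClosed_le (by fun_prop) (by fun_prop)

lemma PairwiseSeparated.of_le (hx : PairwiseSeparated L x) (hyx : y ≤ x)
    (hy : ∀ p q k, p ≠ q → x p k + L p k ≤ x q k → x p k + L p k ≤ y q k) :
    PairwiseSeparated L y := by
  intro i j hij
  obtain ⟨k, hk | hk⟩ := hx i j hij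
  · exact ⟨k, .inl ((add_le_add_left (hyx i k) _).trans (hy i j k hij hk))⟩
  · exact ⟨k, .inr ((add_le_add_left (hyx j k) _).trans (hy j i k hij.symm hk))⟩

lemma strictMono_sum_sum [Fintype β] [Fintype ι] :
    StrictMono fun x : β → ι → ℝ => ∑ i, ∑ k, x i k := by
  intro x y hxy
  obtain ⟨hle, i, hlt⟩ := Pi.lt_def.1 hxy
  exact Finset.sum_lt_sum (fun j _ => Fintype.sum_mono (hle j))
    ⟨i, Finset.mem_univ i, Fintype.sum_strictMono hlt⟩

lemma exists_pos_forall_le_sub_of_lt [Finite β] (s : β → ℝ) {t : ℝ} (ht : 0 < t) :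
    ∃ ε, 0 < ε ∧ ε ≤ t ∧ ∀ j, s j < t → s j ≤ t - ε := by
  classical
  have : Fintype β := Fintype.ofFinite β
  set T := insert 0 ((Finset.univ.filter (s · < t)).image s)
  have hT : T.Nonempty := Finset.insert_nonempty _ _
  refine ⟨t - T.max' hT, ?_, ?_, fun j hj => ?_⟩
  · rw [sub_pos, Finset.max'_lt_iff]
    simp only [T, Finset.mem_insert, Finset.mem_image, Finset.mem_filter]
    rintro _ (rfl | ⟨j, ⟨-, hj⟩, rfl⟩) <;> assumption
  · simpa using T.le_max' 0 (Finset.mem_insert_self _ _)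
  · have : s j ∈ T := Finset.mem_insert_of_mem (Finset.mem_image_of_mem s (by simpa using hj))
    linarith [T.le_max' _ this]

lemma exists_lt_of_forall_add_ne [Finite β] [DecidableEq β] [DecidableEq ι] {a : β → ι → ℝ}
    (hx : x ∈ Icc 0 a ∩ {x | PairwiseSeparated L x}) {i : β} {k : ι} (hpos : 0 < x i k)
    (hfree : ∀ j, x j k + L j k ≠ x i k) :
    ∃ y ∈ Icc 0 a ∩ {x | PairwiseSeparated L x}, y < x := by
  obtain ⟨⟨hx0, hxa⟩, hsep⟩ := hx
  obtain ⟨ε, hε, hεx, hgap⟩ := exists_pos_forall_le_sub_of_lt (fun j => x j k + L j k) hpos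
  set y := update x i (update (x i) k (x i k - ε))
  have hyx : y < x := update_lt_self_iff.2 (update_lt_self_iff.2 (by linarith))
  refine ⟨y, ⟨⟨?_, hyx.le.trans hxa⟩, hsep.of_le hyx.le fun p q m hpq hle => ?_⟩, hyx⟩
  · simp only [y, le_update_iff]
    exact ⟨⟨by simpa using hεx, fun m _ => hx0 i m⟩, fun j _ => hx0 j⟩
  · rcases eq_or_ne q i with rfl | hq
    · rcases eq_or_ne m k with rfl | hm
      · simpa [y] using hgap p (hle.lt_of_ne (hfree p))
      · simpa [y, hm] using hle
    · simpa [y, hq] using hle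

end

lemma exists_subset_sum_of_forall_eq_zero_or {β : Type*} [Finite β] {x ℓ : β → ℝ}
    (hℓ : ∀ j, 0 < ℓ j) (h : ∀ i, x i = 0 ∨ ∃ j, x j + ℓ j = x i) (i : β) :
    ∃ S : Finset β, (∀ j ∈ S, x j < x i) ∧ x i = ∑ j ∈ S, ℓ j := by
  classical
  induction i using (Finite.wellFounded_of_trans_of_irrefl (InvImage (· < ·) x)).induction with
  | _ i ih =>
  obtain h0 | ⟨j, hj⟩ := h i
  · exact ⟨∅, by simp, by simp [h0]⟩
  have hji : x j < x i := by linarith [hℓ j]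
  obtain ⟨S, hSlt, hSsum⟩ := ih j hji
  refine ⟨insert j S, ?_, ?_⟩
  · simpa [hji] using fun m hm => (hSlt m hm).trans hji
  · rw [Finset.sum_insert fun hjS => (hSlt j hjS).false, ← hSsum, ← hj, add_comm]

lemma exists_lowering_forall_eq_zero_or_touching {β ι : Type*} [Finite β] [Fintype ι]
    {L a : β → ι → ℝ} (ha0 : 0 ≤ a) (ha : PairwiseSeparated L a) :
    ∃ x ∈ Icc 0 a ∩ {x | PairwiseSeparated L x},
      ∀ i k, x i k = 0 ∨ ∃ j, x j k + L j k = x i k := by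
  classical
  have : Fintype β := Fintype.ofFinite β
  obtain ⟨x, hxF, hmin⟩ :=
    (isCompact_Icc.inter_right (isClosed_setOf_pairwiseSeparated L)).exists_isMinOn
      ⟨a, ⟨ha0, le_rfl⟩, ha⟩ (f := fun x : β → ι → ℝ => ∑ i, ∑ k, x i k) (by fun_prop)
  refine ⟨x, hxF, fun i k => ?_⟩
  by_contra! hfree
  obtain ⟨y, hyF, hyx⟩ := exists_lt_of_forall_add_ne hxF (hxF.1.1 i k |>.lt_of_ne' hfree.1) hfree.2
  exact (hmin hyF).not_gt (strictMono_sum_sum hyx)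

theorem three_dim_normal_pattern_general (n : ℕ) (D : Fin 3 → ℝ)
    (L : Fin n → Fin 3 → ℝ) (hL : ∀ i k, 0 < L i k)
    (a : Fin n → Fin 3 → ℝ)
    (hcont : ∀ i, (Set.univ.pi fun k => Set.Icc (a i k) (a i k + L i k)) ⊆
      Set.univ.pi fun k => Set.Icc 0 (D k))
    (hdisj : ∀ i j, i ≠ j →
      Disjoint (Set.univ.pi fun k => Set.Ioo (a i k) (a i k + L i k))
        (Set.univ.pi fun k => Set.Ioo (a j k) (a j k + L j k))) :
    ∃ a' : Fin n → Fin 3 → ℝ,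
      (∀ i k, 0 ≤ a' i k ∧ a' i k ≤ a i k) ∧
      (∀ i, (Set.univ.pi fun k => Set.Icc (a' i k) (a' i k + L i k)) ⊆
        Set.univ.pi fun k => Set.Icc 0 (D k)) ∧
      (∀ i j, i ≠ j →
        Disjoint (Set.univ.pi fun k => Set.Ioo (a' i k) (a' i k + L i k))
          (Set.univ.pi fun k => Set.Ioo (a' j k) (a' j k + L j k))) ∧
      (∀ i k, ∃ S : Finset (Fin n), i ∉ S ∧ a' i k = ∑ j ∈ S, L j k) := by
  have hlt (x : Fin n → Fin 3 → ℝ) i k : x i k < x i k + L i k := lt_add_of_pos_right _ (hL i k)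
  have hcont_iff (x : Fin n → Fin 3 → ℝ) i :=
    univ_pi_Icc_add_subset_univ_pi_Icc_iff (u := x i) (D := D) (hL i · |>.le)
  have ha0 : 0 ≤ a := fun i => ((hcont_iff a i).1 (hcont i)).1
  obtain ⟨x, ⟨⟨hx0, hxa⟩, hxsep⟩, htouch⟩ := exists_lowering_forall_eq_zero_or_touching ha0
    fun i j hij => (disjoint_univ_pi_Ioo_iff (hlt a i) (hlt a j)).1 (hdisj i j hij)
  refine ⟨x, fun i k => ⟨hx0 i k, hxa i k⟩,
    fun i => (hcont_iff x i).2
      ⟨hx0 i, (add_le_add_left (hxa i) _).trans ((hcont_iff a i).1 (hcont i)).2⟩,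
    fun i j hij => (disjoint_univ_pi_Ioo_iff (hlt x i) (hlt x j)).2 (hxsep i j hij),
    fun i k => ?_⟩
  obtain ⟨S, hSlt, hS⟩ := exists_subset_sum_of_forall_eq_zero_or (hL · k) (htouch · k) i
  exact ⟨S, fun hi => (hSlt i hi).false, hS⟩

theorem three_dim_normal_pattern (n : ℕ) (hn : 1 ≤ n) (D : Fin 3 → ℝ)
    (hD : ∀ k, 0 < D k) (L : Fin n → Fin 3 → ℝ) (hL : ∀ i k, 0 < L i k)
    (a : Fin n → Fin 3 → ℝ)
    (hcont : ∀ i, (Set.univ.pi fun k => Set.Icc (a i k) (a i k + L i k)) ⊆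
      Set.univ.pi fun k => Set.Icc 0 (D k))
    (hdisj : ∀ i j, i ≠ j →
      Disjoint (Set.univ.pi fun k => Set.Ioo (a i k) (a i k + L i k))
        (Set.univ.pi fun k => Set.Ioo (a j k) (a j k + L j k))) :
    ∃ a' : Fin n → Fin 3 → ℝ,
      (∀ i k, 0 ≤ a' i k ∧ a' i k ≤ a i k) ∧
      (∀ i, (Set.univ.pi fun k => Set.Icc (a' i k) (a' i k + L i k)) ⊆
        Set.univ.pi fun k => Set.Icc 0 (D k)) ∧
      (∀ i j, i ≠ j →
        Disjoint (Set.univ.pi fun k => Set.Ioo (a' i k) (a' i k + L i k))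
          (Set.univ.pi fun k => Set.Ioo (a' j k) (a' j k + L j k))) ∧
      (∀ i k, ∃ S : Finset (Fin n), i ∉ S ∧ a' i k = ∑ j ∈ S, L j k) :=
  three_dim_normal_pattern_general n D L hL a hcont hdisj
end

section
/- Let n ≥ 1, let c > 0, let l : Fin n → ℝ be such that each l i is a positive integer multiple of c, let D ≥ 0, and let x : Fin n → ℝ satisfy 0 ≤ x i and x i + l i ≤ D for each i, with the open intervals (x i, x i + l i) pairwise disjoint for distinct indices. Then there exists x' : Fin n → ℝ such that 0 ≤ x' i ≤ x i for each i, the open intervals (x' i, x' i + l i) are pairwise disjoint for distinct indices, x' i + l i ≤ D for each i, and each x' i is a nonnegative integer multiple of c. -/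
/-!
Round every left end point down to a multiple of `c`, `t ↦ ⌊t / c⌋₊ * c`. This map is monotone
and, because each length `l i` is a multiple of `c`, it commutes with `t ↦ t + l i`; hence it maps
the right end point of each interval to the right end point of the rounded interval. Two open
intervals are disjoint iff the smaller right end point is at most the larger left end point, and a
monotone map preserves that inequality, since it commutes with `min` and `max`.
-/

open Set

theorem Monotone.disjoint_Ioo_add {α : Type*} [Add α] [LinearOrder α] [DenselyOrdered α]
    {f : α → α} (hf : Monotone f) {a b l l' : α} (ha : f (a + l) = f a + l)
    (hb : f (b + l') = f b + l') (h : Disjoint (Ioo a (a + l)) (Ioo b (b + l'))) :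
    Disjoint (Ioo (f a) (f a + l)) (Ioo (f b) (f b + l')) := by
  rw [Ioo_disjoint_Ioo] at h ⊢
  rw [← ha, ← hb, ← hf.map_min, ← hf.map_max]
  exact hf h

section FloorMultiple

variable {K : Type*} [Field K] [LinearOrder K] [IsStrictOrderedRing K] [FloorSemiring K]
  {c t : K}

noncomputable def floorMultiple (c t : K) : K := ⌊t / c⌋₊ * c

theorem floorMultiple_nonneg (hc : 0 ≤ c) : 0 ≤ floorMultiple c t := by
  unfold floorMultiple
  positivity

theorem floorMultiple_le (hc : 0 < c) (ht : 0 ≤ t) : floorMultiple c t ≤ t :=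
  calc floorMultiple c t ≤ t / c * c := by
        unfold floorMultiple
        gcongr
        exact Nat.floor_le (div_nonneg ht hc.le)
    _ = t := div_mul_cancel₀ t hc.ne'

theorem monotone_floorMultiple (hc : 0 < c) : Monotone (floorMultiple c) := fun _ _ h => by
  unfold floorMultiple
  gcongr

theorem floorMultiple_add_natCast_mul (hc : 0 < c) (ht : 0 ≤ t) (m : ℕ) :
    floorMultiple c (t + m * c) = floorMultiple c t + m * c := by
  have hdiv : (t + m * c) / c = t / c + m := by field_simp
  rw [floorMultiple, hdiv, Nat.floor_add_natCast (div_nonneg ht hc.le)]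
  push_cast
  rw [add_mul, floorMultiple]

end FloorMultiple

theorem gcd_discretisation_general (n : ℕ) (c : ℝ) (hc : 0 < c)
    (l : Fin n → ℝ) (hl : ∀ i, ∃ m : ℕ, 0 < m ∧ l i = (m : ℝ) * c)
    (D : ℝ) (x : Fin n → ℝ)
    (hx0 : ∀ i, 0 ≤ x i) (hxD : ∀ i, x i + l i ≤ D)
    (hdisj : ∀ i j, i ≠ j →
      Disjoint (Set.Ioo (x i) (x i + l i)) (Set.Ioo (x j) (x j + l j))) :
    ∃ x' : Fin n → ℝ,
      (∀ i, 0 ≤ x' i ∧ x' i ≤ x i) ∧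
      (∀ i j, i ≠ j →
        Disjoint (Set.Ioo (x' i) (x' i + l i)) (Set.Ioo (x' j) (x' j + l j))) ∧
      (∀ i, x' i + l i ≤ D) ∧
      (∀ i, ∃ m : ℕ, x' i = (m : ℝ) * c) := by
  have hshift : ∀ i, floorMultiple c (x i + l i) = floorMultiple c (x i) + l i := fun i => by
    obtain ⟨m, -, hm⟩ := hl i
    rw [hm, floorMultiple_add_natCast_mul hc (hx0 i)]
  have hle : ∀ i, floorMultiple c (x i) ≤ x i := fun i => floorMultiple_le hc (hx0 i)
  refine ⟨fun i => floorMultiple c (x i), fun i => ⟨floorMultiple_nonneg hc.le, hle i⟩,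
    fun i j hij =>
      (monotone_floorMultiple hc).disjoint_Ioo_add (hshift i) (hshift j) (hdisj i j hij),
    fun i => (add_le_add_left (hle i) _).trans (hxD i), fun i => ⟨_, rfl⟩⟩

theorem gcd_discretisation (n : ℕ) (hn : 1 ≤ n) (c : ℝ) (hc : 0 < c)
    (l : Fin n → ℝ) (hl : ∀ i, ∃ m : ℕ, 0 < m ∧ l i = (m : ℝ) * c)
    (D : ℝ) (hD : 0 ≤ D) (x : Fin n → ℝ)
    (hx0 : ∀ i, 0 ≤ x i) (hxD : ∀ i, x i + l i ≤ D)
    (hdisj : ∀ i j, i ≠ j →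
      Disjoint (Set.Ioo (x i) (x i + l i)) (Set.Ioo (x j) (x j + l j))) :
    ∃ x' : Fin n → ℝ,
      (∀ i, 0 ≤ x' i ∧ x' i ≤ x i) ∧
      (∀ i j, i ≠ j →
        Disjoint (Set.Ioo (x' i) (x' i + l i)) (Set.Ioo (x' j) (x' j + l j))) ∧
      (∀ i, x' i + l i ≤ D) ∧
      (∀ i, ∃ m : ℕ, x' i = (m : ℝ) * c) :=
  gcd_discretisation_general n c hc l hl D x hx0 hxD hdisj
end
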